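/- (Theorem 1, non-monotone case) Let k ≥ 2, let g : (k+1)^𝒳 → ℝ≥0 be a normalized k-submodular function (not necessarily monotone), w : 𝒳 → ℝ>0 a positive weight function, τ > 0 and ε ∈ (0,1], and suppose there exists a k-set v with g(v) ≥ τ and w(v) ≤ W̄. Then the k-set 𝐬 returned by Algorithm 1 with inputs (τ, W̄, ε) satisfies w(𝐬) ≤ ((4−ε)/(3ε))·W̄ and g(𝐬) ≥ (1−ε)τ/3. -/

import Mathlib

/-- A `k`-set: an assignment of each ground element to one of `k` parts or to none
(`none` meaning the element belongs to no part).  This encodes a tuple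
`(S_1, …, S_k)` of pairwise disjoint subsets of `X`. -/
abbrev KSet (X : Type*) (k : ℕ) := X → Option (Fin k)

namespace KSet

variable {X : Type*} {k : ℕ}

/-- The empty `k`-set `𝟎 = (∅, …, ∅)`. -/
def bot (X : Type*) (k : ℕ) : KSet X k := fun _ => none

/-- `le s t` is the partial order `s ⊑ t`, i.e. `Sᵢ ⊆ Tᵢ` for every `i ∈ [k]`. -/
def le (s t : KSet X k) : Prop := ∀ (x : X) (i : Fin k), s x = some i → t x = some i

/-- The meet `s ⊓ t`, whose `i`-th component is `Sᵢ ∩ Tᵢ`. -/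
def meet (s t : KSet X k) : KSet X k := fun x => if s x = t x then s x else none

/-- The join `s ⊔ t`, whose `i`-th component is `(Sᵢ ∪ Tᵢ) \ ⋃_{j ≠ i} (Sⱼ ∪ Tⱼ)`. -/
def join (s t : KSet X k) : KSet X k := fun x =>
  match s x, t x with
  | none, b => b
  | some i, none => some i
  | some i, some j => if i = j then some i else none

/-- The `k`-set `(x, i)` whose only nonempty component is `Sᵢ = {x}`. -/
def single [DecidableEq X] (x : X) (i : Fin k) : KSet X k :=
  fun y => if y = x then some i else none

/-- `s ⊔ (x, i)`: add the element `x` to the `i`-th part of `s`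
(intended for `x ∉ E(s)`). -/
def add [DecidableEq X] (s : KSet X k) (x : X) (i : Fin k) : KSet X k :=
  Function.update s x (some i)

end KSet

/-- The marginal gain `Δ_{x,i} g (s) = g (s ⊔ (x,i)) - g s`. -/
def marg {X : Type*} [DecidableEq X] {k : ℕ} (g : KSet X k → ℝ) (s : KSet X k)
    (x : X) (i : Fin k) : ℝ :=
  g (KSet.add s x i) - g s

/-- `g` is `k`-submodular: `g (s ⊓ t) + g (s ⊔ t) ≤ g s + g t` for all `k`-sets. -/
def KSubmodular {X : Type*} {k : ℕ} (g : KSet X k → ℝ) : Prop :=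
  ∀ s t : KSet X k, g (KSet.meet s t) + g (KSet.join s t) ≤ g s + g t

/-- `g` is monotone with respect to `⊑`. -/
def KMonotone {X : Type*} {k : ℕ} (g : KSet X k → ℝ) : Prop :=
  ∀ s t : KSet X k, KSet.le s t → g s ≤ g t

/-- The weight `w(s) = ∑_{x ∈ E(s)} w x` of a `k`-set. -/
def wtot {X : Type*} [Fintype X] {k : ℕ} (w : X → ℝ) (s : KSet X k) : ℝ :=
  ∑ x ∈ Finset.univ.filter (fun x => s x ≠ none), w x

/-- A greedy chain for `g`: `c 0 = 𝟎` and each step adds one new element at a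
position maximizing the marginal gain over `i ∈ [k]`. -/
def GreedyChain {X : Type*} [DecidableEq X] {k : ℕ} (g : KSet X k → ℝ) (m : ℕ)
    (c : ℕ → KSet X k) : Prop :=
  c 0 = KSet.bot X k ∧
  ∀ p, p < m → ∃ (xp : X) (ip : Fin k),
    c p xp = none ∧
    c (p + 1) = KSet.add (c p) xp ip ∧
    ∀ i : Fin k, marg g (c p) xp i ≤ marg g (c p) xp ip

/-- A choice of position in `[k]` maximizing `f`. -/
noncomputable def argmaxFin {k : ℕ} [NeZero k] (f : Fin k → ℝ) : Fin k :=
  Classical.choose (Finset.exists_max_image Finset.univ f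
    ⟨⟨0, Nat.pos_of_ne_zero (NeZero.ne k)⟩, Finset.mem_univ _⟩)

open Classical in
/-- One step of Algorithm 1, processing the arriving element `x` with current
solution `s`, threshold `τ`, density threshold `θ` and cost upper bound `A`:
if `x` is big (`w x ≤ A` and `max_i g((x,i)) ≥ τ`) then restart from `(x,i')`
with `i'` maximizing `g((x,i))`; otherwise add `(x,i')` with `i'` maximizing the
marginal gain, provided `Δ_{x,i'}g(s)/w(x) ≥ θ` and `w(s) + w(x) ≤ A`. -/
noncomputable def alg1Step {X : Type*} [Fintype X] [DecidableEq X] {k : ℕ} [NeZero k]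
    (g : KSet X k → ℝ) (w : X → ℝ) (τ θ A : ℝ) (s : KSet X k) (x : X) : KSet X k :=
  if w x ≤ A ∧ τ ≤ g (KSet.single x (argmaxFin fun i => g (KSet.single x i))) then
    KSet.single x (argmaxFin fun i => g (KSet.single x i))
  else if θ ≤ marg g s x (argmaxFin fun i => marg g s x i) / w x ∧ wtot w s + w x ≤ A then
    KSet.add s x (argmaxFin fun i => marg g s x i)
  else s

/-- Algorithm 1: starting from `𝟎`, process the elements of the ground set in
their arrival order `order`. -/
noncomputable def alg1 {X : Type*} [Fintype X] [DecidableEq X] {k : ℕ} [NeZero k]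
    (g : KSet X k → ℝ) (w : X → ℝ) (τ θ A : ℝ) (order : List X) : KSet X k :=
  order.foldl (alg1Step g w τ θ A) (KSet.bot X k)

/-- `x` is a big element: `w x ≤ A` and `max_{i ∈ [k]} g((x,i)) ≥ τ`. -/
def IsBig {X : Type*} [DecidableEq X] {k : ℕ} (g : KSet X k → ℝ) (w : X → ℝ)
    (τ A : ℝ) (x : X) : Prop :=
  w x ≤ A ∧ ∃ i : Fin k, τ ≤ g (KSet.single x i)

/-!
If some element is big, the solution is reset to a singleton of value at least `τ` when that
element arrives, and no later step brings the value below `τ`.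

Otherwise every accepted element raises `g` by at least `θ` times its weight, so
`θ · w(𝐬) ≤ g(𝐬)`; if the final weight exceeds `A - W̄` this already gives
`g(𝐬) ≥ θ (A - W̄) = 4 (1 - ε) τ / 3`. If it does not, no element of `v` is ever rejected for
lack of capacity, and the potential `g(o) + 2 g(s) - θ (w(o) - w(s))` never decreases, where `s`
is the current solution and `o` agrees with `v` on the elements still to arrive and with `s`
elsewhere. Indeed, moving an accepted element from its position in `v` to the position chosen
by the algorithm costs `g(o)` at most twice the marginal gain (by `k`-submodularity, using a
second position `j ≠ i'`), and an element of `v` rejected for low density has marginal gain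
less than `θ` times its weight. The potential starts at `g(v) - θ w(v) ≥ (1 - ε) τ` and ends
at `3 g(𝐬)`.
-/

namespace List

variable {α β γ : Type*}

theorem foldl_invariant {f : α → β → α} {p : α → Prop} (h : ∀ a b, p a → p (f a b)) :
    ∀ (l : List β) {a : α}, p a → p (l.foldl f a)
  | [], _, ha => ha
  | b :: l, _, ha => foldl_invariant h l (h _ b ha)

theorem le_foldl_of_le_step [Preorder γ] {f : α → β → α} {P : α → List β → Prop}
    {Φ : α → List β → γ} (hP : ∀ a b l, P a (b :: l) → P (f a b) l)
    (hΦ : ∀ a b l, P a (b :: l) → Φ a (b :: l) ≤ Φ (f a b) l) :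
    ∀ (l : List β) {a : α}, P a l → Φ a l ≤ Φ (l.foldl f a) []
  | [], _, _ => le_rfl
  | b :: l, _, ha => (hΦ _ b l ha).trans (le_foldl_of_le_step hP hΦ l (hP _ b l ha))

end List

theorem le_argmaxFin {k : ℕ} [NeZero k] (f : Fin k → ℝ) (i : Fin k) : f i ≤ f (argmaxFin f) :=
  (Classical.choose_spec (Finset.exists_max_image Finset.univ f
    ⟨⟨0, Nat.pos_of_ne_zero (NeZero.ne k)⟩, Finset.mem_univ _⟩)).2 i (Finset.mem_univ i)

namespace KSet

variable {X : Type*} [DecidableEq X] {k : ℕ} {s t o : KSet X k} {x : X}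

theorem le_update_none (h : s.le o) (hs : s x = none) : s.le (Function.update o x none) := by
  intro y i hy
  rcases eq_or_ne y x with rfl | hyx
  · simp [hs] at hy
  · rw [Function.update_of_ne hyx]
    exact h y i hy

theorem add_update_none (o : KSet X k) (x : X) (i : Fin k) :
    add (Function.update o x none) x i = add o x i :=
  Function.update_idem _ _ _

theorem add_update_none_of_eq {m : Fin k} (h : o x = some m) :
    add (Function.update o x none) x m = o := by
  rw [add_update_none, add, Function.update_eq_self_iff, h]

theorem meet_add_of_le (h : s.le t) (ht : t x = none) (i : Fin k) : meet (add s x i) t = s := by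
  funext y
  rcases eq_or_ne y x with rfl | hyx
  · cases hs : s y with
    | none => simp [meet, add, ht]
    | some m => simp [h y m hs] at ht
  · cases hs : s y with
    | none => simp [meet, add, Function.update_of_ne hyx, hs]
    | some m => simp [meet, add, Function.update_of_ne hyx, hs, h y m hs]

theorem join_add_of_le (h : s.le t) (ht : t x = none) (i : Fin k) :
    join (add s x i) t = add t x i := by
  funext y
  rcases eq_or_ne y x with rfl | hyx
  · simp [join, add, ht]
  · cases hs : s y with
    | none => simp [join, add, Function.update_of_ne hyx, hs]
    | some m => simp [join, add, Function.update_of_ne hyx, hs, h y m hs]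

theorem meet_add_add (hs : s x = none) {i j : Fin k} (hij : i ≠ j) :
    meet (add s x i) (add s x j) = s := by
  funext y
  rcases eq_or_ne y x with rfl | hyx
  · simp [meet, add, hs, hij]
  · simp [meet, add, Function.update_of_ne hyx]

theorem join_add_add (hs : s x = none) {i j : Fin k} (hij : i ≠ j) :
    join (add s x i) (add s x j) = s := by
  funext y
  rcases eq_or_ne y x with rfl | hyx
  · simp [join, add, hs, hij]
  · cases hsy : s y <;> simp [join, add, Function.update_of_ne hyx, hsy]

def piecewise (l : List X) (v s : KSet X k) : KSet X k := fun y => if y ∈ l then v y else s y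

variable {l : List X} {v : KSet X k}

@[simp]
theorem piecewise_nil : piecewise [] v s = s := by
  funext y
  simp [piecewise]

theorem piecewise_of_forall_mem (hl : ∀ y, y ∈ l) : piecewise l v s = v := by
  funext y
  simp [piecewise, hl y]

theorem piecewise_cons_apply_self : piecewise (x :: l) v s x = v x := by
  simp [piecewise]

theorem le_piecewise (hl : ∀ y ∈ l, s y = none) : s.le (piecewise l v s) := by
  intro y i hy
  have hyl : y ∉ l := fun h => by simp [hl y h] at hy
  simp [piecewise, hyl, hy]

theorem piecewise_add (hxl : x ∉ l) (i : Fin k) :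
    piecewise l v (add s x i) = add (piecewise (x :: l) v s) x i := by
  funext y
  rcases eq_or_ne y x with rfl | hyx
  · simp [piecewise, add, hxl]
  · simp [piecewise, add, hyx]

theorem piecewise_eq_update_none (hxl : x ∉ l) (hs : s x = none) :
    piecewise l v s = Function.update (piecewise (x :: l) v s) x none := by
  funext y
  rcases eq_or_ne y x with rfl | hyx
  · simp [piecewise, hxl, hs]
  · simp [piecewise, hyx]

end KSet

open KSet

namespace KSubmodular

variable {X : Type*} [DecidableEq X] {k : ℕ} {g : KSet X k → ℝ} (hsub : KSubmodular g)
  {s o : KSet X k} {x : X} {i' : Fin k}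
include hsub

theorem marg_le_of_le {t : KSet X k} (h : s.le t) (ht : t x = none) (i : Fin k) :
    marg g t x i ≤ marg g s x i := by
  have := hsub (add s x i) t
  rw [meet_add_of_le h ht, join_add_of_le h ht] at this
  unfold marg
  linarith

theorem marg_add_marg_nonneg (hs : s x = none) {i j : Fin k} (hij : i ≠ j) :
    0 ≤ marg g s x i + marg g s x j := by
  have := hsub (add s x i) (add s x j)
  rw [meet_add_add hs hij, join_add_add hs hij] at this
  unfold marg
  linarith

theorem le_update_none_add_marg (h : s.le o) (hs : s x = none)
    (hmax : ∀ i, marg g s x i ≤ marg g s x i') {m : Fin k} (ho : o x = some m) :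
    g o ≤ g (Function.update o x none) + marg g s x i' := by
  have := hsub.marg_le_of_le (le_update_none h hs) (Function.update_self x none o) m
  rw [marg, add_update_none_of_eq ho] at this
  linarith [hmax m]

theorem le_add_add_marg (hk : 2 ≤ k) (h : s.le o) (ho : o x = none)
    (hmax : ∀ i, marg g s x i ≤ marg g s x i') :
    g o ≤ g (add o x i') + marg g s x i' := by
  have : Nontrivial (Fin k) := Fin.nontrivial_iff_two_le.mpr hk
  obtain ⟨j, hj⟩ := exists_ne i'
  have hpair := hsub.marg_add_marg_nonneg ho hj.symm
  have hanti := hsub.marg_le_of_le h ho j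
  have hj_le := hmax j
  unfold marg at hpair hanti hj_le ⊢
  linarith

theorem le_add_add_two_mul_marg (hk : 2 ≤ k) (h : s.le o) (hs : s x = none)
    (hmax : ∀ i, marg g s x i ≤ marg g s x i') (hpos : 0 ≤ marg g s x i') :
    g o ≤ g (add o x i') + 2 * marg g s x i' := by
  have hadd := hsub.le_add_add_marg hk (le_update_none h hs) (Function.update_self x none o) hmax
  rw [add_update_none] at hadd
  cases ho : o x with
  | none =>
    rw [← ho, Function.update_eq_self] at hadd
    linarith
  | some m => linarith [hsub.le_update_none_add_marg h hs hmax ho]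

end KSubmodular

section Weight

variable {X : Type*} [Fintype X] {k : ℕ} {w : X → ℝ} {s : KSet X k} {x : X}

@[simp]
theorem wtot_bot : wtot w (bot X k) = 0 := by
  simp [wtot, bot]

theorem le_wtot (hw : ∀ y, 0 ≤ w y) (hx : s x ≠ none) : w x ≤ wtot w s :=
  Finset.single_le_sum (fun y _ => hw y) (by simp [hx])

variable [DecidableEq X]

theorem filter_add_ne_none (s : KSet X k) (x : X) (i : Fin k) :
    Finset.univ.filter (fun y => add s x i y ≠ none)
      = insert x (Finset.univ.filter (fun y => s y ≠ none)) := by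
  ext y
  simp only [Finset.mem_filter, Finset.mem_univ, true_and, Finset.mem_insert]
  rcases eq_or_ne y x with rfl | hyx
  · simp [add]
  · simp [add, hyx]

theorem wtot_add_of_none (i : Fin k) (hs : s x = none) :
    wtot w (add s x i) = wtot w s + w x := by
  rw [wtot, filter_add_ne_none, Finset.sum_insert (by simp [hs]), add_comm]
  rfl

theorem wtot_add_of_ne_none (i : Fin k) (hs : s x ≠ none) : wtot w (add s x i) = wtot w s := by
  rw [wtot, filter_add_ne_none, Finset.insert_eq_self.2 (by simp [hs])]
  rfl

theorem wtot_add_le (hw : ∀ y, 0 ≤ w y) (s : KSet X k) (x : X) (i : Fin k) :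
    wtot w (add s x i) ≤ wtot w s + w x := by
  by_cases hs : s x = none
  · rw [wtot_add_of_none i hs]
  · rw [wtot_add_of_ne_none i hs]
    linarith [hw x]

theorem wtot_le_wtot_add (hw : ∀ y, 0 ≤ w y) (s : KSet X k) (x : X) (i : Fin k) :
    wtot w s ≤ wtot w (add s x i) := by
  by_cases hs : s x = none
  · rw [wtot_add_of_none i hs]
    linarith [hw x]
  · rw [wtot_add_of_ne_none i hs]

theorem wtot_single (x : X) (i : Fin k) : wtot w (single x i) = w x := by
  have : Finset.univ.filter (fun y => single x i y ≠ none) = {x} := by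
    ext y
    by_cases h : y = x <;> simp [single, h]
  rw [wtot, this, Finset.sum_singleton]

end Weight

def potential {X : Type*} [Fintype X] [DecidableEq X] {k : ℕ} (g : KSet X k → ℝ) (w : X → ℝ)
    (θ : ℝ) (v s : KSet X k) (l : List X) : ℝ :=
  g (piecewise l v s) + 2 * g s - θ * (wtot w (piecewise l v s) - wtot w s)

@[simp]
theorem potential_nil {X : Type*} [Fintype X] [DecidableEq X] {k : ℕ} (g : KSet X k → ℝ)
    (w : X → ℝ) (θ : ℝ) (v s : KSet X k) : potential g w θ v s [] = 3 * g s := by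
  rw [potential, piecewise_nil, sub_self, mul_zero, sub_zero]
  ring

section Algorithm

variable {X : Type*} [DecidableEq X] {k : ℕ} [NeZero k] {g : KSet X k → ℝ}
  {w : X → ℝ} {τ θ A : ℝ} {s : KSet X k} {x : X}

theorem isBig_iff_argmaxFin :
    IsBig g w τ A x ↔ w x ≤ A ∧ τ ≤ g (single x (argmaxFin fun i => g (single x i))) :=
  and_congr_right fun _ =>
    ⟨fun ⟨i, hi⟩ => hi.trans (le_argmaxFin (fun i => g (single x i)) i), fun h => ⟨_, h⟩⟩

variable [Fintype X]

theorem alg1Step_of_isBig (hx : IsBig g w τ A x) :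
    alg1Step g w τ θ A s x = single x (argmaxFin fun i => g (single x i)) := by
  rw [alg1Step, if_pos (isBig_iff_argmaxFin.mp hx)]

theorem alg1Step_of_not_isBig (hx : ¬ IsBig g w τ A x) :
    alg1Step g w τ θ A s x =
      if θ ≤ marg g s x (argmaxFin fun i => marg g s x i) / w x ∧ wtot w s + w x ≤ A then
        add s x (argmaxFin fun i => marg g s x i)
      else s := by
  rw [alg1Step, if_neg (mt isBig_iff_argmaxFin.mpr hx)]

theorem wtot_alg1Step_le (hw : ∀ y, 0 ≤ w y) (hs : wtot w s ≤ A) :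
    wtot w (alg1Step g w τ θ A s x) ≤ A := by
  unfold alg1Step
  split_ifs with hbig hacc
  · rw [wtot_single]
    exact hbig.1
  · exact (wtot_add_le hw s x _).trans hacc.2
  · exact hs

theorem le_g_alg1Step (hθ : 0 ≤ θ) (hw : 0 < w x) (h : IsBig g w τ A x ∨ τ ≤ g s) :
    τ ≤ g (alg1Step g w τ θ A s x) := by
  by_cases hx : IsBig g w τ A x
  · rw [alg1Step_of_isBig hx]
    exact (isBig_iff_argmaxFin.mp hx).2
  · have hs := h.resolve_left hx
    rw [alg1Step_of_not_isBig hx]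
    set i' := argmaxFin fun i => marg g s x i
    split_ifs with hacc
    · have hgain := (le_div_iff₀ hw).mp hacc.1
      unfold marg at hgain
      nlinarith
    · exact hs

variable (hx : ¬ IsBig g w τ A x)
include hx

theorem alg1Step_apply_of_ne {y : X} (hy : y ≠ x) : alg1Step g w τ θ A s x y = s y := by
  rw [alg1Step_of_not_isBig hx]
  split_ifs
  · exact Function.update_of_ne hy _ _
  · rfl

theorem wtot_le_wtot_alg1Step (hw : ∀ y, 0 ≤ w y) :
    wtot w s ≤ wtot w (alg1Step g w τ θ A s x) := by
  rw [alg1Step_of_not_isBig hx]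
  split_ifs
  · exact wtot_le_wtot_add hw s x _
  · exact le_rfl

theorem sub_le_sub_alg1Step (hθ : 0 ≤ θ) (hw : ∀ y, 0 < w y) :
    g s - θ * wtot w s ≤
      g (alg1Step g w τ θ A s x) - θ * wtot w (alg1Step g w τ θ A s x) := by
  rw [alg1Step_of_not_isBig hx]
  set i' := argmaxFin fun i => marg g s x i
  split_ifs with hacc
  · have hgain := (le_div_iff₀ (hw x)).mp hacc.1
    have hwt := mul_le_mul_of_nonneg_left (wtot_add_le (fun y => (hw y).le) s x i') hθ
    unfold marg at hgain
    linarith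
  · exact le_rfl

theorem potential_le_potential_alg1Step (hk : 2 ≤ k) (hsub : KSubmodular g) (hθ : 0 ≤ θ)
    (hw : ∀ y, 0 < w y) {v : KSet X k} {l : List X} (hxl : x ∉ l)
    (hl : ∀ y ∈ x :: l, s y = none) (hcap : v x ≠ none → wtot w s + w x ≤ A) :
    potential g w θ v s (x :: l) ≤ potential g w θ v (alg1Step g w τ θ A s x) l := by
  have hsx : s x = none := hl x List.mem_cons_self
  have hle : s.le (piecewise (x :: l) v s) := le_piecewise hl
  rw [alg1Step_of_not_isBig hx]
  set o := piecewise (x :: l) v s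
  set i' := argmaxFin fun i => marg g s x i
  have hmax : ∀ i, marg g s x i ≤ marg g s x i' := le_argmaxFin (fun i => marg g s x i)
  split_ifs with hacc
  · have hgain := (le_div_iff₀ (hw x)).mp hacc.1
    have hkey := hsub.le_add_add_two_mul_marg hk hle hsx hmax
      ((mul_nonneg hθ (hw x).le).trans hgain)
    have hwo := mul_le_mul_of_nonneg_left (wtot_add_le (fun y => (hw y).le) o x i') hθ
    rw [potential, potential, piecewise_add hxl, wtot_add_of_none i' hsx]
    unfold marg at hkey
    linarith
  · rw [potential, potential, piecewise_eq_update_none hxl hsx]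
    cases hv : v x with
    | none =>
      have ho : none = o x := (piecewise_cons_apply_self.trans hv).symm
      rw [Function.update_eq_self_iff.mpr ho]
    | some m =>
      have ho : o x = some m := piecewise_cons_apply_self.trans hv
      have hden : marg g s x i' < θ * w x :=
        (div_lt_iff₀ (hw x)).mp (lt_of_not_ge fun h => hacc ⟨h, hcap (by simp [hv])⟩)
      have hdrop := hsub.le_update_none_add_marg hle hsx hmax ho
      have hwo := wtot_add_of_none (w := w) m (Function.update_self x none o)
      rw [add_update_none_of_eq ho] at hwo
      rw [hwo]
      linarith

end Algorithm

section Run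

variable {X : Type*} [Fintype X] [DecidableEq X] {k : ℕ} [NeZero k] {g : KSet X k → ℝ}
  {w : X → ℝ} {τ θ A : ℝ}

theorem wtot_foldl_alg1Step_le (hw : ∀ y, 0 ≤ w y) (l : List X) {s : KSet X k}
    (hs : wtot w s ≤ A) : wtot w (l.foldl (alg1Step g w τ θ A) s) ≤ A :=
  List.foldl_invariant (p := fun t => wtot w t ≤ A) (fun _ _ h => wtot_alg1Step_le hw h) l hs

theorem le_g_foldl_alg1Step_of_isBig (hθ : 0 ≤ θ) (hw : ∀ y, 0 < w y) {x : X}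
    (hx : IsBig g w τ A x) {l : List X} (hmem : x ∈ l) (s : KSet X k) :
    τ ≤ g (l.foldl (alg1Step g w τ θ A) s) := by
  obtain ⟨l₁, l₂, rfl⟩ := List.append_of_mem hmem
  rw [List.foldl_append, List.foldl_cons]
  exact List.foldl_invariant (p := fun t => τ ≤ g t)
    (fun _ y h => le_g_alg1Step hθ (hw y) (Or.inr h)) l₂
    (le_g_alg1Step hθ (hw x) (Or.inl hx))

variable (hnobig : ∀ x, ¬ IsBig g w τ A x)
include hnobig

theorem wtot_le_wtot_foldl_alg1Step (hw : ∀ y, 0 ≤ w y) (l : List X) (s : KSet X k) :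
    wtot w s ≤ wtot w (l.foldl (alg1Step g w τ θ A) s) :=
  List.foldl_invariant (p := fun t => wtot w s ≤ wtot w t)
    (fun _ x h => h.trans (wtot_le_wtot_alg1Step (hnobig x) hw)) l le_rfl

theorem sub_le_sub_foldl_alg1Step (hθ : 0 ≤ θ) (hw : ∀ y, 0 < w y) (l : List X)
    (s : KSet X k) :
    g s - θ * wtot w s ≤
      g (l.foldl (alg1Step g w τ θ A) s) - θ * wtot w (l.foldl (alg1Step g w τ θ A) s) :=
  List.foldl_invariant (p := fun t => g s - θ * wtot w s ≤ g t - θ * wtot w t)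
    (fun _ x h => h.trans (sub_le_sub_alg1Step (hnobig x) hθ hw)) l le_rfl

theorem potential_le_three_mul_foldl_alg1Step (hk : 2 ≤ k) (hsub : KSubmodular g)
    (hθ : 0 ≤ θ) (hw : ∀ y, 0 < w y) {v : KSet X k} {W : ℝ} (hwv : wtot w v ≤ W)
    (l : List X) {s : KSet X k} (hnd : l.Nodup) (hl : ∀ y ∈ l, s y = none)
    (hcap : wtot w (l.foldl (alg1Step g w τ θ A) s) ≤ A - W) :
    potential g w θ v s l ≤ 3 * g (l.foldl (alg1Step g w τ θ A) s) := by
  have hw' : ∀ y, 0 ≤ w y := fun y => (hw y).le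
  have := List.le_foldl_of_le_step (f := alg1Step g w τ θ A) (Φ := potential g w θ v)
    (P := fun s l => l.Nodup ∧ (∀ y ∈ l, s y = none) ∧
      wtot w (l.foldl (alg1Step g w τ θ A) s) ≤ A - W) ?_ ?_ l ⟨hnd, hl, hcap⟩
  · rwa [potential_nil] at this
  · rintro s x l ⟨hnd, hl, hcap⟩
    refine ⟨(List.nodup_cons.mp hnd).2, fun y hy => ?_, hcap⟩
    rw [alg1Step_apply_of_ne (hnobig x) (ne_of_mem_of_not_mem hy (List.nodup_cons.mp hnd).1)]
    exact hl y (List.mem_cons_of_mem x hy)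
  · rintro s x l ⟨hnd, hl, hcap⟩
    refine potential_le_potential_alg1Step (hnobig x) hk hsub hθ hw (List.nodup_cons.mp hnd).1 hl
      fun hvx => ?_
    have hrun := wtot_le_wtot_foldl_alg1Step hnobig (θ := θ) hw' l (alg1Step g w τ θ A s x)
    have hstep := wtot_le_wtot_alg1Step (hnobig x) hw' (s := s) (θ := θ)
    have hwx := (le_wtot hw' hvx).trans hwv
    rw [List.foldl_cons] at hcap
    linarith

theorem alg1_value_of_forall_not_isBig (hk : 2 ≤ k) (hsub : KSubmodular g)
    (hnorm : g (bot X k) = 0) (hθ : 0 ≤ θ) (hw : ∀ y, 0 < w y) {v : KSet X k} {W : ℝ}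
    (hwv : wtot w v ≤ W) {order : List X} (hnodup : order.Nodup) (hfull : ∀ x, x ∈ order) :
    θ * (A - W) ≤ g (alg1 g w τ θ A order) ∨ g v - θ * W ≤ 3 * g (alg1 g w τ θ A order) := by
  unfold alg1
  have hdens := sub_le_sub_foldl_alg1Step hnobig hθ hw order (bot X k)
  rw [hnorm, wtot_bot, mul_zero, sub_zero] at hdens
  rcases lt_or_ge (A - W) (wtot w (order.foldl (alg1Step g w τ θ A) (bot X k)))
    with hheavy | hlight
  · left
    nlinarith [mul_le_mul_of_nonneg_left hheavy.le hθ]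
  · right
    have := potential_le_three_mul_foldl_alg1Step hnobig hk hsub hθ hw hwv order (s := bot X k)
      hnodup (fun _ _ => rfl) hlight
    rw [potential, piecewise_of_forall_mem hfull, hnorm, wtot_bot] at this
    nlinarith [mul_le_mul_of_nonneg_left hwv hθ]

end Run

theorem theorem1_nonmonotone_general {X : Type*} [Fintype X] [DecidableEq X] {k : ℕ} [NeZero k]
    (hk : 2 ≤ k)
    (g : KSet X k → ℝ) (hsub : KSubmodular g)
    (hnorm : g (KSet.bot X k) = 0)
    (w : X → ℝ) (hw : ∀ x, 0 < w x)
    (τ Wbar ε : ℝ) (hτ : 0 < τ) (hW : 0 < Wbar) (hε0 : 0 < ε) (hε1 : ε ≤ 1)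
    (v : KSet X k) (hgv : τ ≤ g v) (hwv : wtot w v ≤ Wbar)
    (order : List X) (hnodup : order.Nodup) (hfull : ∀ x : X, x ∈ order) :
    wtot w (alg1 g w τ (ε * τ / Wbar) ((4 - ε) / (3 * ε) * Wbar) order) ≤
        (4 - ε) / (3 * ε) * Wbar ∧
      (1 - ε) * τ / 3 ≤ g (alg1 g w τ (ε * τ / Wbar) ((4 - ε) / (3 * ε) * Wbar) order) := by
  set θ := ε * τ / Wbar with hθdef
  set A := (4 - ε) / (3 * ε) * Wbar with hAdef
  have hθ : 0 ≤ θ := by positivity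
  have hA : 0 ≤ A := mul_nonneg (div_nonneg (by linarith) (by positivity)) hW.le
  refine ⟨wtot_foldl_alg1Step_le (fun y => (hw y).le) order (by rwa [wtot_bot]), ?_⟩
  by_cases hbig : ∃ x, IsBig g w τ A x
  · obtain ⟨x, hx⟩ := hbig
    have := le_g_foldl_alg1Step_of_isBig hθ hw hx (hfull x) (bot X k)
    unfold alg1
    nlinarith
  · have hθA : θ * (A - Wbar) = 4 * (1 - ε) * τ / 3 := by
      rw [hθdef, hAdef]
      field_simp
      ring
    have hθW : θ * Wbar = ε * τ := by
      rw [hθdef]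
      field_simp
    rcases alg1_value_of_forall_not_isBig (not_exists.mp hbig) hk hsub hnorm hθ hw hwv hnodup
      hfull with h | h
    · nlinarith
    · linarith

/-- **Theorem 1, non-monotone case.** If `k ≥ 2`, `g` is a (not
necessarily monotone) normalized `k`-submodular function, `w > 0`, `τ > 0`,
`ε ∈ (0,1]` and some `k`-set `v` has `g v ≥ τ` and `w(v) ≤ W̄`, then the output
`𝐬` of Algorithm 1 with inputs `(τ, W̄, ε)` satisfies
`w(𝐬) ≤ ((4-ε)/(3ε))·W̄` and `g 𝐬 ≥ (1-ε)τ/3`. -/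
theorem theorem1_nonmonotone {X : Type*} [Fintype X] [DecidableEq X] {k : ℕ} [NeZero k]
    (hk : 2 ≤ k)
    (g : KSet X k → ℝ) (hnn : ∀ s : KSet X k, 0 ≤ g s) (hsub : KSubmodular g)
    (hnorm : g (KSet.bot X k) = 0)
    (w : X → ℝ) (hw : ∀ x, 0 < w x)
    (τ Wbar ε : ℝ) (hτ : 0 < τ) (hW : 0 < Wbar) (hε0 : 0 < ε) (hε1 : ε ≤ 1)
    (v : KSet X k) (hgv : τ ≤ g v) (hwv : wtot w v ≤ Wbar)
    (order : List X) (hnodup : order.Nodup) (hfull : ∀ x : X, x ∈ order) :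
    wtot w (alg1 g w τ (ε * τ / Wbar) ((4 - ε) / (3 * ε) * Wbar) order) ≤
        (4 - ε) / (3 * ε) * Wbar ∧
      (1 - ε) * τ / 3 ≤ g (alg1 g w τ (ε * τ / Wbar) ((4 - ε) / (3 * ε) * Wbar) order) :=
  theorem1_nonmonotone_general hk g hsub hnorm w hw τ Wbar ε hτ hW hε0 hε1 v hgv hwv order hnodup
    hfull
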